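/- In the unit ball 𝔹², the domain X := E(e₁, 2) \ E(e₁, 1), where E(e₁, R) = {z ∈ 𝔹² : |1 − z₁|² < R(1 − ‖z‖²)} is the horosphere of center e₁ = (1,0), radius R and pole 0, is not 1-Bloch in 𝔹²: the orthogonal projection of X onto the complex geodesic φ(ζ) = (ζ, 0) equals the horodisc E_𝔻(1, 2) = {ζ ∈ 𝔻 : |1 − ζ|² < 2(1 − |ζ|²)}, which is not a Bloch subdomain of 𝔻. -/

import Mathlib

open Metric Set Filter
open scoped ENNReal NNReal

noncomputable section

/-- The open unit disc in `ℂ`. -/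
def uDisc : Set ℂ := Metric.ball 0 1

/-- The inverse hyperbolic tangent. -/
def artanh (x : ℝ) : ℝ := Real.log ((1 + x) / (1 - x)) / 2

/-- The Poincaré (hyperbolic) distance on the unit disc. -/
def pDist (ζ η : ℂ) : ℝ :=
  artanh ‖(ζ - η) / (1 - (starRingEnd ℂ) ζ * η)‖

/-- Hyperbolic ball in the unit disc. -/
def hBall (z : ℂ) (r : ℝ) : Set ℂ := {w ∈ uDisc | pDist w z < r}

/-- Bloch radius of a subset of the unit disc. -/
def blochRadiusD (U : Set ℂ) : ℝ≥0∞ :=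
  ⨆ (r : NNReal) (_ : ∃ z ∈ uDisc, hBall z (r : ℝ) ⊆ U), (r : ℝ≥0∞)

/-- `tanh` extended to `ℝ≥0∞`, with `tanh ∞ = 1`. -/
def tanhE (x : ℝ≥0∞) : ℝ := if x = ⊤ then 1 else Real.tanh x.toReal

variable {E : Type*} [NormedAddCommGroup E] [NormedSpace ℂ E]

/-- Admissible values for the Lempert function of `D` between `z` and `w`. -/
def lemSet (D : Set E) (z w : E) : Set ℝ :=
  {c | ∃ (f : ℂ → E) (ζ : ℂ), DifferentiableOn ℂ f uDisc ∧ MapsTo f uDisc D ∧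
    f 0 = z ∧ ζ ∈ uDisc ∧ f ζ = w ∧ c = pDist 0 ζ}

/-- The Kobayashi (pseudo)distance of `D`, defined via chains of analytic discs. -/
def kDist (D : Set E) (z w : E) : ℝ :=
  sInf {s | ∃ (m : ℕ) (p : ℕ → E), p 0 = z ∧ p m = w ∧ (∀ i, i ≤ m → p i ∈ D) ∧
      s = ∑ i ∈ Finset.range m, sInf (lemSet D (p i) (p (i + 1)))}

/-- Kobayashi ball of center `z` and radius `r` in `D`. -/
def kBall (D : Set E) (z : E) (r : ℝ) : Set E := {w ∈ D | kDist D w z < r}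

/-- Bloch radius of `X ⊆ D` with respect to the Kobayashi distance of `D`. -/
def blochRadius (D X : Set E) : ℝ≥0∞ :=
  ⨆ (r : NNReal) (_ : ∃ z ∈ D, kBall D z (r : ℝ) ⊆ X), (r : ℝ≥0∞)

/-- The Kobayashi infinitesimal (pseudo)metric of `D`. -/
def kMetric (D : Set E) (z v : E) : ℝ :=
  sInf {c | ∃ (f : ℂ → E) (r : ℝ), DifferentiableOn ℂ f uDisc ∧ MapsTo f uDisc D ∧
    f 0 = z ∧ 0 < r ∧ deriv f 0 = r • v ∧ c = 1 / r}

/-- The hyperbolic Lipschitz constant `μ_D(X)` of `X` inside `D`. -/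
def lipConst (D X : Set E) : ℝ :=
  sSup {t | ∃ z ∈ X, ∃ v : E, v ≠ 0 ∧ t = kMetric D z v / kMetric X z v}

/-- `comps f j = f j ∘ ⋯ ∘ f 0`, the iterated function system associated to `f`. -/
def comps (f : ℕ → E → E) : ℕ → E → E
  | 0 => f 0
  | (j + 1) => f (j + 1) ∘ comps f j

/-- `F` is a limit, in the compact-open topology on `D`, of a subsequence of the
iterated function system associated to `f`. -/
def IFSLimit (D : Set E) (f : ℕ → E → E) (F : E → E) : Prop :=
  ∃ s : ℕ → ℕ, StrictMono s ∧
    TendstoLocallyUniformlyOn (fun j => comps f (s j)) F atTop D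

/-- `X ⊆ D` is degenerate in `D`: every limit of every iterated function system of
holomorphic self-maps of `D` with image in `X` is constant. -/
def Degenerate (D X : Set E) : Prop :=
  ∀ f : ℕ → E → E, (∀ j, DifferentiableOn ℂ (f j) D ∧ MapsTo (f j) D X) →
    ∀ F : E → E, IFSLimit D f F → ∃ c, ∀ z ∈ D, F z = c

/-- A complex geodesic of `D`: a holomorphic isometry from the Poincaré distance of
the unit disc to the Kobayashi distance of `D`. -/
def IsComplexGeodesic (D : Set E) (φ : ℂ → E) : Prop :=
  DifferentiableOn ℂ φ uDisc ∧ MapsTo φ uDisc D ∧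
    ∀ ζ ∈ uDisc, ∀ η ∈ uDisc, kDist D (φ ζ) (φ η) = pDist ζ η

/-- A Lempert projection associated to the complex geodesic `φ`: a holomorphic
retraction of `D` onto `φ(𝔻)` with affine fibers. -/
def IsLempertProjection (D : Set E) (φ : ℂ → E) (ρ : E → E) : Prop :=
  DifferentiableOn ℂ ρ D ∧ MapsTo ρ D (φ '' uDisc) ∧
    (∀ z ∈ D, ρ (ρ z) = ρ z) ∧ (∀ ζ ∈ uDisc, ρ (φ ζ) = φ ζ) ∧
    ∀ ζ ∈ uDisc, ∃ (L : E →ₗ[ℂ] ℂ) (c : ℂ), L ≠ 0 ∧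
      {w ∈ D | ρ w = φ ζ} = {w ∈ D | L w = c}

/-- A Lempert projection device `(φ, ρ, ρ̃)`: a complex geodesic, an associated
Lempert projection, and the left inverse `ρ̃ = φ⁻¹ ∘ ρ`. -/
def IsLempertDevice (D : Set E) (φ : ℂ → E) (ρ : E → E) (ρt : E → ℂ) : Prop :=
  IsComplexGeodesic D φ ∧ IsLempertProjection D φ ρ ∧
    ∀ z ∈ D, ρt z ∈ uDisc ∧ φ (ρt z) = ρ z

/-- `X` is 1-Bloch in `D`: there is `C > 0` such that for every Lempert projection
device, `ρ̃(X)` is contained in a Bloch subdomain of the disc of Bloch radius `< C`. -/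
def OneBloch (D X : Set E) : Prop :=
  ∃ C > (0 : ℝ), ∀ (φ : ℂ → E) (ρ : E → E) (ρt : E → ℂ),
    IsLempertDevice D φ ρ ρt → ∃ U : Set ℂ, IsOpen U ∧ IsConnected U ∧ U ⊆ uDisc ∧
      ρt '' X ⊆ U ∧ blochRadiusD U < ENNReal.ofReal C

/-- `X` is c-Bloch in `D`: there is `C > 0` such that for every Lempert projection
device, `ρ̃(X ∩ φ(𝔻))` is contained in a Bloch subdomain of Bloch radius `≤ C`. -/
def CBloch (D X : Set E) : Prop :=
  ∃ C > (0 : ℝ), ∀ (φ : ℂ → E) (ρ : E → E) (ρt : E → ℂ),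
    IsLempertDevice D φ ρ ρt → ∃ U : Set ℂ, IsOpen U ∧ IsConnected U ∧ U ⊆ uDisc ∧
      ρt '' (X ∩ φ '' uDisc) ⊆ U ∧ blochRadiusD U ≤ ENNReal.ofReal C


/-- The horosphere of center `e₁ = (1,0)`, radius `R` and pole `0` in `𝔹²`. -/
def horoB (R : ℝ) : Set (EuclideanSpace ℂ (Fin 2)) :=
  {z ∈ Metric.ball (0 : EuclideanSpace ℂ (Fin 2)) 1 |
    ‖1 - z 0‖ ^ 2 < R * (1 - ‖z‖ ^ 2)}

/-- The horodisc of center `1` and radius `R` in the unit disc. -/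
def horoD (R : ℝ) : Set ℂ :=
  {ζ ∈ uDisc | ‖1 - ζ‖ ^ 2 < R * (1 - ‖ζ‖ ^ 2)}

/-- The complex absolute value, as an absolute value. -/
def Complex.abs : AbsoluteValue ℂ ℝ where
  toFun z := ‖z‖
  map_mul' := norm_mul
  nonneg' := norm_nonneg
  eq_zero' _ := norm_eq_zero
  add_le' := norm_add_le

theorem Complex.norm_eq_abs (z : ℂ) : ‖z‖ = Complex.abs z := rfl

@[simp]
theorem Complex.abs_eq_norm' (z : ℂ) : Complex.abs z = ‖z‖ := rfl

theorem Complex.abs_apply (z : ℂ) : Complex.abs z = Real.sqrt (Complex.normSq z) :=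
  Complex.norm_def z

theorem Complex.sq_abs (z : ℂ) : Complex.abs z ^ 2 = Complex.normSq z := Complex.sq_norm z

theorem Complex.abs_conj (z : ℂ) : Complex.abs ((starRingEnd ℂ) z) = Complex.abs z :=
  Complex.norm_conj z

theorem Complex.abs_ofReal (r : ℝ) : Complex.abs (r : ℂ) = |r| :=
  show ‖(r : ℂ)‖ = |r| by simp

theorem Complex.abs_re_le_abs (z : ℂ) : |z.re| ≤ Complex.abs z := Complex.abs_re_le_norm z

theorem Complex.abs_le_abs_of_mapsTo_ball_self {f : ℂ → ℂ}
    (hd : DifferentiableOn ℂ f (ball 0 1)) (h : MapsTo f (ball 0 1) (ball 0 1))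
    (h0 : f 0 = 0) {z : ℂ} (hz : Complex.abs z < 1) : Complex.abs (f z) ≤ Complex.abs z :=
  norm_le_norm_of_mapsTo_ball hd (h.mono_right ball_subset_closedBall) h0 hz

-- ## Auxiliary lemmas

lemma tanh_eq (x : ℝ) : Real.tanh x = (Real.exp (2*x) - 1) / (Real.exp (2*x) + 1) := by
  rw [Real.tanh_eq_sinh_div_cosh, Real.sinh_eq, Real.cosh_eq]
  have h1 : Real.exp x ≠ 0 := (Real.exp_pos x).ne'
  have h2 : Real.exp (2*x) = Real.exp x * Real.exp x := by
    rw [← Real.exp_add]; ring_nf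
  have h3 : Real.exp (-x) = (Real.exp x)⁻¹ := Real.exp_neg x
  rw [h2, h3]
  field_simp

lemma tanh_lt_one (x : ℝ) : Real.tanh x < 1 := by
  rw [tanh_eq]
  have := Real.exp_pos (2*x)
  rw [div_lt_one (by linarith)]; linarith

lemma tanh_nonneg {x : ℝ} (hx : 0 ≤ x) : 0 ≤ Real.tanh x := by
  rw [tanh_eq]
  have : (1:ℝ) ≤ Real.exp (2*x) := Real.one_le_exp (by linarith)
  have h2 : (0:ℝ) < Real.exp (2*x) + 1 := by linarith
  apply div_nonneg (by linarith) (by linarith)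

lemma tanh_strictMono : StrictMono Real.tanh := by
  intro x y hxy
  rw [tanh_eq, tanh_eq]
  have hx := Real.exp_pos (2*x)
  have hy := Real.exp_pos (2*y)
  have hlt : Real.exp (2*x) < Real.exp (2*y) := Real.exp_lt_exp.2 (by linarith)
  rw [div_lt_div_iff₀ (by linarith) (by linarith)]
  nlinarith

lemma tanh_artanh {x : ℝ} (h0 : 0 ≤ x) (h1 : x < 1) : Real.tanh (artanh x) = x := by
  have h1x : (0:ℝ) < 1 - x := by linarith
  have hy : (0:ℝ) < (1 + x) / (1 - x) := by positivity
  rw [tanh_eq, artanh]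
  have h2 : 2 * (Real.log ((1 + x) / (1 - x)) / 2) = Real.log ((1 + x) / (1 - x)) := by ring
  rw [h2, Real.exp_log hy]
  rw [div_eq_iff (by positivity)]
  field_simp
  ring

-- mono of artanh on [0,1)

lemma artanh_nonneg {x : ℝ} (h0 : 0 ≤ x) (h1 : x < 1) : 0 ≤ artanh x := by
  unfold artanh
  have hx1 : (0:ℝ) < 1 - x := by linarith
  have h : (1:ℝ) ≤ (1 + x) / (1 - x) := by
    rw [le_div_iff₀ hx1]; linarith
  have := Real.log_nonneg h
  linarith

lemma artanh_zero : artanh 0 = 0 := by simp [artanh]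


lemma artanh_add {u v : ℝ} (hu0 : 0 ≤ u) (hu1 : u < 1) (hv0 : 0 ≤ v) (hv1 : v < 1) :
    artanh ((u + v) / (1 + u * v)) = artanh u + artanh v := by
  have h1 : (0:ℝ) < 1 + u * v := by nlinarith
  have hX1 : (1:ℝ) + (u + v) / (1 + u * v) = (1+u)*(1+v)/(1+u*v) := by field_simp; ring
  have hX2 : (1:ℝ) - (u + v) / (1 + u * v) = (1-u)*(1-v)/(1+u*v) := by field_simp; ring
  unfold artanh
  rw [hX1, hX2]
  have hu' : (0:ℝ) < 1 - u := by linarith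
  have hv' : (0:ℝ) < 1 - v := by linarith
  have h2 : (1+u)*(1+v)/(1+u*v) / ((1-u)*(1-v)/(1+u*v)) = ((1+u)/(1-u)) * ((1+v)/(1-v)) := by
    field_simp
  rw [h2, Real.log_mul (by positivity) (by positivity)]
  ring

lemma artanh_le_artanh {x y : ℝ} (h0 : 0 ≤ x) (hxy : x ≤ y) (h1 : y < 1) :
    artanh x ≤ artanh y := by
  unfold artanh
  have hx1 : (0:ℝ) < 1 - x := by linarith
  have hy1 : (0:ℝ) < 1 - y := by linarith
  have h : (1 + x) / (1 - x) ≤ (1 + y) / (1 - y) := by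
    rw [div_le_div_iff₀ hx1 hy1]; nlinarith
  have hpos : (0:ℝ) < (1 + x) / (1 - x) := by positivity
  have := Real.log_le_log hpos h
  linarith

lemma normSq_key (a b : ℂ) :
    Complex.normSq (1 - (starRingEnd ℂ) a * b) - Complex.normSq (b - a)
      = (1 - Complex.normSq a) * (1 - Complex.normSq b) := by
  simp [Complex.normSq_apply, Complex.mul_re, Complex.mul_im, Complex.sub_re, Complex.sub_im,
    Complex.one_re, Complex.one_im]
  ring

lemma one_sub_ne {a b : ℂ} (ha : Complex.abs a < 1) (hb : Complex.abs b < 1) :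
    1 - (starRingEnd ℂ) a * b ≠ 0 := by
  intro h
  have h1 : (starRingEnd ℂ) a * b = 1 := by linear_combination -h
  have := congrArg Complex.abs h1
  rw [map_mul, Complex.abs_conj, map_one] at this
  nlinarith [Complex.abs.nonneg a, Complex.abs.nonneg b]

lemma abs_sub_lt_abs_one_sub {a b : ℂ} (ha : Complex.abs a < 1) (hb : Complex.abs b < 1) :
    Complex.abs (b - a) < Complex.abs (1 - (starRingEnd ℂ) a * b) := by
  have key := normSq_key a b
  have ha' : Complex.normSq a < 1 := by rw [← Complex.sq_abs] at *; nlinarith [Complex.abs.nonneg a]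
  have hb' : Complex.normSq b < 1 := by rw [← Complex.sq_abs] at *; nlinarith [Complex.abs.nonneg b]
  have h2 : Complex.normSq (b - a) < Complex.normSq (1 - (starRingEnd ℂ) a * b) := by nlinarith
  rw [Complex.abs_apply, Complex.abs_apply]
  exact Real.sqrt_lt_sqrt (Complex.normSq_nonneg _) h2

lemma mobius_lt_one {a b : ℂ} (ha : Complex.abs a < 1) (hb : Complex.abs b < 1) :
    Complex.abs ((b - a) / (1 - (starRingEnd ℂ) a * b)) < 1 := by
  rw [map_div₀, div_lt_one]
  · exact abs_sub_lt_abs_one_sub ha hb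
  · have := abs_sub_lt_abs_one_sub ha hb
    have := Complex.abs.nonneg (b - a)
    linarith

local notation "conj'" => starRingEnd ℂ

lemma schwarz_pick {g : ℂ → ℂ} (hd : DifferentiableOn ℂ g (ball 0 1))
    (hm : MapsTo g (ball 0 1) (ball 0 1)) {ζ : ℂ} (hζ : ζ ∈ ball 0 1) :
    Complex.abs ((g ζ - g 0) / (1 - (starRingEnd ℂ) (g 0) * g ζ)) ≤ Complex.abs ζ := by
  have h0 : (0:ℂ) ∈ ball (0:ℂ) 1 := by simp
  have ha : Complex.abs (g 0) < 1 := by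
    have := hm h0; simpa [Complex.abs_apply, mem_ball, Complex.dist_eq] using this
  set a := g 0 with ha_def
  set h : ℂ → ℂ := fun z => (g z - a) / (1 - (starRingEnd ℂ) a * g z) with hh
  have habs : ∀ z ∈ ball (0:ℂ) 1, Complex.abs (g z) < 1 := by
    intro z hz; have := hm hz; simpa [mem_ball, Complex.dist_eq] using this
  have hdh : DifferentiableOn ℂ h (ball 0 1) := by
    apply DifferentiableOn.div
    · exact hd.sub (differentiableOn_const _)
    · exact (differentiableOn_const _).sub ((differentiableOn_const _).mul hd)
    · intro z hz; exact one_sub_ne ha (habs z hz)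
  have hmh : MapsTo h (ball 0 1) (ball 0 1) := by
    intro z hz
    have := mobius_lt_one ha (habs z hz)
    simpa [hh, mem_ball, Complex.dist_eq] using this
  have hh0 : h 0 = 0 := by simp [hh, ha_def]
  have := Complex.abs_le_abs_of_mapsTo_ball_self hdh hmh hh0 (by simpa [mem_ball, Complex.dist_eq] using hζ)
  simpa [hh] using this

lemma abs_one_sub_comm (x y : ℂ) :
    Complex.abs (1 - (starRingEnd ℂ) x * y) = Complex.abs (1 - (starRingEnd ℂ) y * x) := by
  rw [← Complex.abs_conj (1 - (starRingEnd ℂ) y * x)]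
  congr 1
  simp only [map_sub, map_one, map_mul, Complex.conj_conj]
  ring

set_option maxHeartbeats 1000000 in
lemma pDist_triangle {a b c : ℂ} (ha : Complex.abs a < 1) (hb : Complex.abs b < 1)
    (hc : Complex.abs c < 1) : pDist a c ≤ pDist a b + pDist b c := by
  have dba : (1 : ℂ) - conj' b * a ≠ 0 := one_sub_ne hb ha
  have dbc : (1 : ℂ) - conj' b * c ≠ 0 := one_sub_ne hb hc
  have dbb : (1 : ℂ) - conj' b * b ≠ 0 := one_sub_ne hb hb
  have dac : (1 : ℂ) - conj' a * c ≠ 0 := one_sub_ne ha hc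
  set A : ℂ := (a - b) / (1 - conj' b * a) with hA
  set C : ℂ := (c - b) / (1 - conj' b * c) with hC
  have hu1 : Complex.abs A < 1 := mobius_lt_one hb ha
  have hv1 : Complex.abs C < 1 := mobius_lt_one hb hc
  set u := Complex.abs A with hu
  set v := Complex.abs C with hv
  have hu0 : 0 ≤ u := Complex.abs.nonneg A
  have hv0 : 0 ≤ v := Complex.abs.nonneg C
  have dAC : (1 : ℂ) - conj' A * C ≠ 0 := one_sub_ne hu1 hv1
  -- pDist a b = artanh u, pDist b c = artanh v
  have hab : pDist a b = artanh u := by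
    unfold pDist
    congr 1
    rw [Complex.norm_eq_abs, hu, hA, map_div₀, map_div₀, abs_one_sub_comm a b]
  have hbc : pDist b c = artanh v := by
    unfold pDist
    congr 1
    rw [Complex.norm_eq_abs, hv, hC, map_div₀, map_div₀, abs_one_sub_comm b c]
    rw [show b - c = -(c - b) by ring, map_neg_eq_map]
  -- conjugate of A
  have hconjA : conj' A = (conj' a - conj' b) / (1 - b * conj' a) := by
    rw [hA, map_div₀]
    simp only [map_sub, map_one, map_mul, Complex.conj_conj]
  -- invariance identities
  have E1 : A - C = (a - c) * (1 - conj' b * b) / ((1 - conj' b * a) * (1 - conj' b * c)) := by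
    rw [hA, hC]
    rw [div_sub_div _ _ dba dbc]
    ring
  have dba' : (1 : ℂ) - b * conj' a ≠ 0 := by
    intro h
    apply dba
    have := congrArg (starRingEnd ℂ) h
    simpa [map_sub, map_mul, Complex.conj_conj] using this
  have E2 : (1 : ℂ) - conj' A * C
      = (1 - conj' a * c) * (1 - conj' b * b) / ((1 - b * conj' a) * (1 - conj' b * c)) := by
    rw [hconjA, hC]
    rw [div_mul_div_comm, one_sub_div (mul_ne_zero dba' dbc)]
    ring
  -- abs computations
  have habsAC : Complex.abs (A - C) = Complex.abs (a - c) * Complex.abs (1 - conj' b * b)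
      / (Complex.abs (1 - conj' b * a) * Complex.abs (1 - conj' b * c)) := by
    rw [E1, map_div₀, map_mul, map_mul]
  have habsden : Complex.abs (1 - conj' A * C)
      = Complex.abs (1 - conj' a * c) * Complex.abs (1 - conj' b * b)
      / (Complex.abs (1 - conj' b * a) * Complex.abs (1 - conj' b * c)) := by
    rw [E2, map_div₀, map_mul, map_mul]
    have hba' : Complex.abs (1 - b * conj' a) = Complex.abs (1 - conj' b * a) := by
      rw [← Complex.abs_conj (1 - b * conj' a)]
      congr 1
      simp only [map_sub, map_one, map_mul, Complex.conj_conj]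
    rw [hba']
  have hinv : Complex.abs ((a - c) / (1 - conj' a * c))
      = Complex.abs ((A - C) / (1 - conj' A * C)) := by
    rw [map_div₀, map_div₀, habsAC, habsden]
    have p1 : Complex.abs (1 - conj' b * a) ≠ 0 := Complex.abs.ne_zero dba
    have p2 : Complex.abs (1 - conj' b * c) ≠ 0 := Complex.abs.ne_zero dbc
    have p3 : Complex.abs (1 - conj' b * b) ≠ 0 := Complex.abs.ne_zero dbb
    have p4 : Complex.abs (1 - conj' a * c) ≠ 0 := Complex.abs.ne_zero dac
    rw [div_div_div_cancel_right₀ (mul_ne_zero p1 p2), mul_div_mul_right _ _ p3]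
  -- Step 2: sharp bound at center 0
  have hsq : Complex.abs (A - C) * (1 + u * v) ≤ (u + v) * Complex.abs (1 - conj' A * C) := by
    set t : ℝ := (conj' A * C).re with hT
    have ht : -(u * v) ≤ t := by
      have h1 : |t| ≤ Complex.abs (conj' A * C) := Complex.abs_re_le_abs _
      rw [map_mul, Complex.abs_conj] at h1
      have := neg_abs_le t
      rw [hu, hv]
      linarith
    have n1 : Complex.normSq (A - C) = Complex.normSq A + Complex.normSq C - 2 * t := by
      rw [hT]
      simp [Complex.normSq_apply, Complex.sub_re, Complex.sub_im, Complex.mul_re, Complex.mul_im]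
      ring
    have n2 : Complex.normSq (1 - conj' A * C)
        = 1 - 2 * t + Complex.normSq A * Complex.normSq C := by
      rw [hT]
      simp [Complex.normSq_apply, Complex.sub_re, Complex.sub_im, Complex.mul_re, Complex.mul_im,
        Complex.one_re, Complex.one_im]
      ring
    have sA : u ^ 2 = Complex.normSq A := by rw [hu, Complex.sq_abs]
    have sC : v ^ 2 = Complex.normSq C := by rw [hv, Complex.sq_abs]
    have sAC : (Complex.abs (A - C)) ^ 2 = Complex.normSq (A - C) := Complex.sq_abs _
    have sden : (Complex.abs (1 - conj' A * C)) ^ 2 = Complex.normSq (1 - conj' A * C) :=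
      Complex.sq_abs _
    have key : (Complex.abs (A - C) * (1 + u * v)) ^ 2
        ≤ ((u + v) * Complex.abs (1 - conj' A * C)) ^ 2 := by
      have expand1 : (Complex.abs (A - C) * (1 + u * v)) ^ 2
          = (u^2 + v^2 - 2*t) * (1 + u*v)^2 := by
        rw [mul_pow, sAC, n1, sA, sC]
      have expand2 : ((u + v) * Complex.abs (1 - conj' A * C)) ^ 2
          = (u + v)^2 * (1 - 2*t + u^2 * v^2) := by
        rw [mul_pow, sden, n2, sA, sC]
      rw [expand1, expand2]
      nlinarith [mul_nonneg (mul_nonneg (by linarith : (0:ℝ) ≤ t + u*v)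
        (by nlinarith : (0:ℝ) ≤ 1 - u^2)) (by nlinarith : (0:ℝ) ≤ 1 - v^2)]
    have hnn1 : 0 ≤ Complex.abs (A - C) * (1 + u * v) := by positivity
    have hnn2 : 0 ≤ (u + v) * Complex.abs (1 - conj' A * C) := by positivity
    nlinarith [key, hnn1, hnn2]
  -- conclude
  have hden_pos : 0 < Complex.abs (1 - conj' A * C) := by
    exact Complex.abs.pos dAC
  have huv : 0 < 1 + u * v := by nlinarith
  have hXlt : (u + v) / (1 + u * v) < 1 := by
    rw [div_lt_one huv]; nlinarith
  have hdac : Complex.abs ((a - c) / (1 - conj' a * c)) ≤ (u + v) / (1 + u * v) := by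
    rw [hinv, map_div₀, div_le_div_iff₀ hden_pos huv]
    linarith [hsq]
  have := artanh_le_artanh (Complex.abs.nonneg ((a - c) / (1 - conj' a * c))) hdac hXlt
  calc pDist a c ≤ artanh ((u + v) / (1 + u * v)) := this
    _ = artanh u + artanh v := artanh_add hu0 hu1 hv0 hv1
    _ = pDist a b + pDist b c := by rw [hab, hbc]


lemma mem_uDisc {z : ℂ} : z ∈ uDisc ↔ Complex.abs z < 1 := by
  simp [uDisc, mem_ball, Complex.dist_eq]

lemma arith_c {k x : ℝ} (hk0 : 0 ≤ k) (hx1 : 2/3 ≤ x) (hkx : k ≤ x) (hx2 : x < 1) :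
    1/3 * (1 - k^2*x^2) ≤ x*(1-k^2) := by
  have hx0 : (0:ℝ) ≤ x := by linarith
  have hxx : x^2 < 1 := by nlinarith
  have hA : 0 ≤ (x^2 - k^2)*(3*x - x^2) := by
    apply mul_nonneg
    · nlinarith
    · nlinarith
  have hB : 0 ≤ (1-x^2)*(3*x-1-x^2) := by
    apply mul_nonneg
    · linarith
    · linarith
  nlinarith [hA, hB]

lemma arith_cr {k x : ℝ} (hk0 : 0 ≤ k) (hx0 : 0 ≤ x) (hk1 : k < 1) (hx2 : x < 1) :
    x*(1-k^2) + k*(1-x^2) ≤ 1 - k^2*x^2 := by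
  have hkx1 : k*x < 1 := by nlinarith
  have hT : 0 ≤ (1-k)*(1-x)*(1-k*x) :=
    mul_nonneg (mul_nonneg (by linarith) (by linarith)) (by linarith)
  nlinarith [hT]

lemma disc_step {p s c q : ℝ} (h1 : (p-c)^2+s^2 < q^2) (h2 : 1/3 ≤ c) (h3 : c+q ≤ 1)
    (hq0 : 0 ≤ q) : (1-p)^2 + s^2 < 2*(1 - (p^2+s^2)) := by
  have hpc : p - c < q := by nlinarith [sq_nonneg s]
  have hA : 0 ≤ (q - (p - c)) * (c - 1/3) := mul_nonneg (by linarith) (by linarith)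
  have hB : (q + c - 1/3)^2 ≤ (2/3)^2 := by nlinarith
  nlinarith [h1, hA, hB]

set_option maxHeartbeats 1000000 in
lemma hball_in_horoD (r : ℝ) (hr : 0 ≤ r) : ∃ z ∈ uDisc, hBall z r ⊆ horoD 2 := by
  obtain ⟨k, hk⟩ : ∃ k : ℝ, k = Real.tanh r := ⟨_, rfl⟩
  have hk0 : 0 ≤ k := hk ▸ tanh_nonneg hr
  have hk1 : k < 1 := hk ▸ tanh_lt_one r
  obtain ⟨x, hx⟩ : ∃ x : ℝ, x = max (2/3 : ℝ) k := ⟨_, rfl⟩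
  have hx1 : 2/3 ≤ x := hx ▸ le_max_left _ _
  have hkx : k ≤ x := hx ▸ le_max_right _ _
  have hx2 : x < 1 := by
    rw [hx]; exact max_lt (by norm_num) hk1
  have hx0 : 0 ≤ x := by linarith
  refine ⟨(x : ℂ), ?_, ?_⟩
  · rw [mem_uDisc, Complex.abs_ofReal, abs_of_nonneg hx0]; exact hx2
  intro w hw
  obtain ⟨hw1, hw2⟩ := hw
  have hwabs : Complex.abs w < 1 := mem_uDisc.1 hw1
  have hxabs : Complex.abs (x : ℂ) < 1 := by
    rw [Complex.abs_ofReal, abs_of_nonneg hx0]; exact hx2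
  -- the quotient is < 1
  have hqlt : Complex.abs ((w - (x:ℂ)) / (1 - (starRingEnd ℂ) w * (x:ℂ))) < 1 := by
    rw [map_div₀, div_lt_one (Complex.abs.pos (one_sub_ne hwabs hxabs))]
    rw [show w - (x:ℂ) = -((x:ℂ) - w) by ring, map_neg_eq_map]
    exact abs_sub_lt_abs_one_sub hwabs hxabs
  have hq0 : 0 ≤ Complex.abs ((w - (x:ℂ)) / (1 - (starRingEnd ℂ) w * (x:ℂ))) :=
    Complex.abs.nonneg _
  -- from pDist < r get quotient < k
  have hqk : Complex.abs ((w - (x:ℂ)) / (1 - (starRingEnd ℂ) w * (x:ℂ))) < k := by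
    have h1 : artanh (Complex.abs ((w - (x:ℂ)) / (1 - (starRingEnd ℂ) w * (x:ℂ)))) < r := hw2
    have h2 := tanh_strictMono h1
    rw [tanh_artanh hq0 hqlt] at h2
    rw [hk]
    exact h2
  -- square it
  have habs : Complex.abs (w - (x:ℂ)) < k * Complex.abs (1 - (starRingEnd ℂ) w * (x:ℂ)) := by
    rw [map_div₀, div_lt_iff₀ (Complex.abs.pos (one_sub_ne hwabs hxabs))] at hqk
    exact hqk
  have hsq : Complex.normSq (w - (x:ℂ)) < k^2 * Complex.normSq (1 - (starRingEnd ℂ) w * (x:ℂ)) := by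
    have h1 := Complex.abs.nonneg (w - (x:ℂ))
    have h2 := Complex.abs.nonneg (1 - (starRingEnd ℂ) w * (x:ℂ))
    rw [← Complex.sq_abs, ← Complex.sq_abs]
    nlinarith
  -- coordinates
  obtain ⟨p, hp⟩ : ∃ p : ℝ, p = w.re := ⟨_, rfl⟩
  obtain ⟨s, hs⟩ : ∃ s : ℝ, s = w.im := ⟨_, rfl⟩
  have hns1 : Complex.normSq (w - (x:ℂ)) = (p - x)^2 + s^2 := by
    rw [hp, hs]
    simp [Complex.normSq_apply, Complex.sub_re, Complex.sub_im]
    ring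
  have hns2 : Complex.normSq (1 - (starRingEnd ℂ) w * (x:ℂ)) = (1 - p*x)^2 + x^2*s^2 := by
    rw [hp, hs]
    simp [Complex.normSq_apply, Complex.sub_re, Complex.sub_im, Complex.mul_re, Complex.mul_im]
    ring
  rw [hns1, hns2] at hsq
  have hwn : p^2 + s^2 < 1 := by
    have h0 : Complex.normSq w < 1 := by
      rw [← Complex.sq_abs]; nlinarith [Complex.abs.nonneg w]
    have h1 : Complex.normSq w = p^2 + s^2 := by
      rw [hp, hs]; simp [Complex.normSq_apply]; ring
    linarith [h1 ▸ h0]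
  have hxx : x^2 < 1 := by nlinarith
  have hkk : k^2 < 1 := by nlinarith
  have hkx1 : k*x < 1 := by nlinarith
  -- set up the disc data
  obtain ⟨D1, hD1⟩ : ∃ d : ℝ, d = 1 - k^2*x^2 := ⟨_, rfl⟩
  have hD1pos : 0 < D1 := by
    have h5 : (k*x)^2 < 1 := by nlinarith [mul_nonneg hk0 hx0]
    rw [hD1]; nlinarith [h5]
  obtain ⟨c, hc⟩ : ∃ c : ℝ, c = x*(1-k^2)/D1 := ⟨_, rfl⟩
  obtain ⟨ρ, hρ⟩ : ∃ q : ℝ, q = k*(1-x^2)/D1 := ⟨_, rfl⟩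
  have hρ0 : 0 ≤ ρ := by
    rw [hρ]
    apply div_nonneg _ hD1pos.le
    nlinarith [hxx]
  have h1 : (p - c)^2 + s^2 < ρ^2 := by
    have key : ((p-c)^2 + s^2 - ρ^2) * D1
        = (1-k^2*x^2)*(p^2+s^2) - 2*x*p*(1-k^2) + x^2 - k^2 := by
      rw [hc, hρ]
      have hD1ne : D1 ≠ 0 := hD1pos.ne'
      field_simp
      subst hD1
      ring
    have hexp : (1-k^2*x^2)*(p^2+s^2) - 2*x*p*(1-k^2) + x^2 - k^2
        = ((p-x)^2 + s^2) - k^2*((1-p*x)^2 + x^2*s^2) := by ring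
    have hneg : ((p-c)^2 + s^2 - ρ^2) * D1 < 0 := by
      rw [key, hexp]; linarith [hsq]
    nlinarith [hneg, hD1pos]
  have h2 : 1/3 ≤ c := by
    rw [hc, le_div_iff₀ hD1pos, hD1]
    exact arith_c hk0 hx1 hkx hx2
  have h3 : c + ρ ≤ 1 := by
    rw [hc, hρ, ← add_div, div_le_one hD1pos, hD1]
    exact arith_cr hk0 hx0 hk1 hx2
  have h4 := disc_step h1 h2 h3 hρ0
  -- conclude membership in horoD 2
  refine ⟨hw1, ?_⟩
  rw [Complex.sq_norm, Complex.sq_norm]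
  have e1 : Complex.normSq (1 - w) = (1-p)^2 + s^2 := by
    rw [hp, hs]
    simp [Complex.normSq_apply, Complex.sub_re, Complex.sub_im]
    ring
  have e2 : Complex.normSq w = p^2 + s^2 := by
    rw [hp, hs]; simp [Complex.normSq_apply]; ring
  rw [e1, e2]
  linarith [h4]


lemma norm_sq_two (z : EuclideanSpace ℂ (Fin 2)) :
    ‖z‖^2 = (Complex.abs (z 0))^2 + (Complex.abs (z 1))^2 := by
  rw [EuclideanSpace.norm_eq, Fin.sum_univ_two, Real.sq_sqrt (by positivity)]
  simp

lemma coord_le (z : EuclideanSpace ℂ (Fin 2)) : Complex.abs (z 0) ≤ ‖z‖ := by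
  have h := norm_sq_two z
  nlinarith [Complex.abs.nonneg (z 0), Complex.abs.nonneg (z 1), norm_nonneg z,
    sq_nonneg (Complex.abs (z 1))]

lemma horo_image_eq :
    (fun z : EuclideanSpace ℂ (Fin 2) => z 0) '' (horoB 2 \ horoB 1) = horoD 2 := by
  ext ζ
  constructor
  · rintro ⟨z, ⟨⟨hzb, hz2⟩, _⟩, rfl⟩
    have h1 : ‖z‖ < 1 := mem_ball_zero_iff.1 hzb
    have h2 : Complex.abs (z 0) ≤ ‖z‖ := coord_le z
    refine ⟨by simp [uDisc, mem_ball, Complex.dist_eq]; simp only [Complex.abs_eq_norm'] at h2; linarith, ?_⟩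
    have h3 : (Complex.abs (z 0))^2 ≤ ‖z‖^2 := by nlinarith [Complex.abs.nonneg (z 0)]
    simp only [Complex.abs_eq_norm'] at h3
    show ‖1 - z 0‖ ^ 2 < 2 * (1 - ‖z 0‖ ^ 2)
    nlinarith [hz2]
  · rintro ⟨hζd, hζ2⟩
    have hζ1 : Complex.abs ζ < 1 := by simpa [uDisc, mem_ball, Complex.dist_eq] using hζd
    set a : ℝ := 1 - (Complex.abs ζ)^2 with ha
    set b : ℝ := (Complex.abs (1 - ζ))^2 with hb
    have ha0 : 0 < a := by nlinarith [Complex.abs.nonneg ζ]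
    have hb0 : 0 < b := by
      have : (1 : ℂ) - ζ ≠ 0 := by
        intro h
        have : ζ = 1 := by linear_combination -h
        rw [this] at hζ1; simp at hζ1
      have := Complex.abs.pos this
      positivity
    have hb2a : b < 2*a := hζ2
    set t : ℝ := max 0 (a - b) with ht
    have ht0 : 0 ≤ t := le_max_left _ _
    have htab : a - b ≤ t := le_max_right _ _
    have htlt : t < a - b/2 := by
      rw [ht]
      apply max_lt <;> linarith
    set z : EuclideanSpace ℂ (Fin 2) := (WithLp.equiv 2 (Fin 2 → ℂ)).symm ![ζ, (Real.sqrt t : ℂ)] with hz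
    have hz0 : z 0 = ζ := rfl
    have hz1 : z 1 = (Real.sqrt t : ℂ) := rfl
    have hzn : ‖z‖^2 = (Complex.abs ζ)^2 + t := by
      rw [norm_sq_two, hz0, hz1, Complex.abs_ofReal, abs_of_nonneg (Real.sqrt_nonneg t),
        Real.sq_sqrt ht0]
    have hznlt : ‖z‖ < 1 := by
      have h4 : ‖z‖^2 < 1 := by rw [hzn]; nlinarith
      nlinarith [norm_nonneg z]
    refine ⟨z, ⟨⟨⟨mem_ball_zero_iff.2 hznlt, ?_⟩, ?_⟩, hz0⟩⟩
    · rw [hz0, hzn]; rw [Complex.norm_eq_abs]; linarith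
    · intro hmem
      obtain ⟨_, hlt⟩ := hmem
      rw [hz0, hzn] at hlt
      -- hlt : b < 1 * (1 - ((abs ζ)^2 + t)) = a - t, but t ≥ a - b
      simp only [one_mul] at hlt
      rw [Complex.norm_eq_abs] at hlt
      linarith


lemma pDist_zero_left (ζ : ℂ) : pDist 0 ζ = artanh (Complex.abs ζ) := by
  simp [pDist]

lemma pDist_self (a : ℂ) : pDist a a = 0 := by
  simp [pDist, artanh]

lemma pdist_arg_lt_one {a b : ℂ} (ha : Complex.abs a < 1) (hb : Complex.abs b < 1) :
    Complex.abs ((a - b) / (1 - (starRingEnd ℂ) a * b)) < 1 := by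
  have h := mobius_lt_one ha hb
  rwa [show b - a = -(a - b) by ring, neg_div, map_neg_eq_map] at h

lemma pDist_nonneg {a b : ℂ} (ha : Complex.abs a < 1) (hb : Complex.abs b < 1) :
    0 ≤ pDist a b :=
  artanh_nonneg (Complex.abs.nonneg _) (pdist_arg_lt_one ha hb)

lemma pDist_eq_symm_abs {a b : ℂ} :
    pDist a b = artanh (Complex.abs ((b - a) / (1 - (starRingEnd ℂ) a * b))) := by
  unfold pDist
  rw [show b - a = -(a - b) by ring, neg_div, map_neg_eq_map]
  rfl

lemma lemSet_nonneg {D : Set E} {z w : E} : ∀ c ∈ lemSet D z w, 0 ≤ c := by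
  rintro c ⟨f, ζ, _, _, _, hζ, _, rfl⟩
  rw [pDist_zero_left]
  exact artanh_nonneg (Complex.abs.nonneg _) (mem_uDisc.1 hζ)

lemma sInf_lemSet_nonneg (D : Set E) (z w : E) : 0 ≤ sInf (lemSet D z w) :=
  Real.sInf_nonneg lemSet_nonneg

lemma kDist_chain_nonneg (D : Set E) (z w : E) :
    ∀ s ∈ {s | ∃ (m : ℕ) (p : ℕ → E), p 0 = z ∧ p m = w ∧ (∀ i, i ≤ m → p i ∈ D) ∧
      s = ∑ i ∈ Finset.range m, sInf (lemSet D (p i) (p (i + 1)))}, 0 ≤ s := by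
  rintro s ⟨m, p, _, _, _, rfl⟩
  exact Finset.sum_nonneg fun i _ => sInf_lemSet_nonneg D _ _

lemma kDist_bddBelow (D : Set E) (z w : E) :
    BddBelow {s | ∃ (m : ℕ) (p : ℕ → E), p 0 = z ∧ p m = w ∧ (∀ i, i ≤ m → p i ∈ D) ∧
      s = ∑ i ∈ Finset.range m, sInf (lemSet D (p i) (p (i + 1)))} :=
  ⟨0, kDist_chain_nonneg D z w⟩

abbrev E2 := EuclideanSpace ℂ (Fin 2)
def B2 : Set E2 := Metric.ball 0 1

lemma coord_lt_one {z : E2} (hz : z ∈ B2) : Complex.abs (z 0) < 1 :=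
  lt_of_le_of_lt (coord_le z) (mem_ball_zero_iff.1 hz)

lemma lemSet_lower {z w : E2} (hz : z ∈ B2) (hw : w ∈ B2) :
    ∀ c ∈ lemSet B2 z w, pDist (z 0) (w 0) ≤ c := by
  rintro c ⟨f, ζ, hdf, hmf, hf0, hζ, hfζ, rfl⟩
  set g : ℂ → ℂ := fun lam => f lam 0 with hg
  have hdg : DifferentiableOn ℂ g (ball 0 1) := by
    have : g = fun lam => (EuclideanSpace.proj (0 : Fin 2)) (f lam) := by
      funext lam; simp [hg]
    rw [this]
    exact (EuclideanSpace.proj (0 : Fin 2)).differentiable.comp_differentiableOn hdf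
  have hmg : MapsTo g (ball 0 1) (ball 0 1) := by
    intro lam hlam
    have := hmf hlam
    simpa [hg, mem_ball, Complex.dist_eq] using coord_lt_one this
  have hsp := schwarz_pick hdg hmg (show ζ ∈ ball 0 1 from hζ)
  have hg0 : g 0 = z 0 := by rw [hg]; simp [hf0]
  have hgζ : g ζ = w 0 := by rw [hg]; simp [hfζ]
  rw [hg0, hgζ] at hsp
  rw [pDist_zero_left, pDist_eq_symm_abs]
  exact artanh_le_artanh (Complex.abs.nonneg _) hsp (mem_uDisc.1 hζ)

lemma mobius_param {α β ζ' : ℂ} (hα : Complex.abs α < 1) (hβ : Complex.abs β < 1)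
    (hζ' : ζ' = (β - α) / (1 - (starRingEnd ℂ) α * β)) :
    (ζ' + α) / (1 + (starRingEnd ℂ) α * ζ') = β := by
  have d1 : 1 - (starRingEnd ℂ) α * β ≠ 0 := one_sub_ne hα hβ
  have hζlt : Complex.abs ζ' < 1 := hζ' ▸ mobius_lt_one hα hβ
  have d2 : 1 + (starRingEnd ℂ) α * ζ' ≠ 0 := by
    have hneg : Complex.abs (-α) < 1 := by rwa [map_neg_eq_map]
    have := one_sub_ne hneg hζlt
    simpa using this
  rw [div_eq_iff d2, hζ']
  linear_combination (div_mul_cancel₀ (β - α) d1)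

lemma norm_add_smul_sq (z v : E2) (mu : ℂ) :
    ‖z + mu • v‖^2 = ‖z‖^2 + 2*(mu * (inner ℂ z v : ℂ)).re + Complex.normSq mu * ‖v‖^2 := by
  rw [norm_add_sq (𝕜 := ℂ)]
  rw [inner_smul_right]
  rw [norm_smul]
  simp [RCLike.re_to_complex, mul_pow, Complex.sq_norm]

set_option maxHeartbeats 1000000 in
lemma lemSet_nonempty {z w : E2} (hz : z ∈ B2) (hw : w ∈ B2) :
    (lemSet B2 z w).Nonempty := by
  rcases eq_or_ne z w with rfl | hzw
  · exact ⟨pDist 0 0, fun _ => z, 0, differentiableOn_const z, fun _ _ => hz, rfl,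
      by simp [mem_uDisc], rfl, rfl⟩
  have hznorm : ‖z‖ < 1 := mem_ball_zero_iff.1 hz
  have hwnorm : ‖w‖ < 1 := mem_ball_zero_iff.1 hw
  set v : E2 := w - z with hv
  have hvne : v ≠ 0 := sub_ne_zero.2 (Ne.symm hzw)
  set V : ℝ := ‖v‖^2 with hV
  have hVpos : 0 < V := by
    have := norm_pos_iff.2 hvne
    positivity
  set βc : ℂ := (inner ℂ z v : ℂ) with hβ
  -- the key quadratic identity
  have key : ∀ mu : ℂ, V * ‖z + mu • v‖^2
      = Complex.normSq ((V:ℂ)*mu + (starRingEnd ℂ) βc) + V*‖z‖^2 - Complex.normSq βc := by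
    intro mu
    rw [norm_add_smul_sq]
    simp only [Complex.normSq_apply, Complex.add_re, Complex.add_im, Complex.mul_re,
      Complex.mul_im, Complex.ofReal_re, Complex.ofReal_im, Complex.conj_re, Complex.conj_im]
    ring
  set R2 : ℝ := V*(1 - ‖z‖^2) + Complex.normSq βc with hR2
  have hR2pos : 0 < R2 := by
    rw [hR2]
    have h9 := Complex.normSq_nonneg βc
    nlinarith [mul_pos hVpos (by nlinarith [norm_nonneg z] : (0:ℝ) < 1 - ‖z‖^2)]
  set R : ℝ := Real.sqrt R2 with hR
  have hRpos : 0 < R := Real.sqrt_pos.2 hR2pos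
  have hRsq : R^2 = R2 := Real.sq_sqrt hR2pos.le
  -- |conj βc| < R  (from q(0) = ‖z‖² < 1)
  have h0 : Complex.normSq ((starRingEnd ℂ) βc) < R2 := by
    rw [Complex.normSq_conj, hR2]
    nlinarith [mul_pos hVpos (by nlinarith [norm_nonneg z] : (0:ℝ) < 1 - ‖z‖^2)]
  -- |V + conj βc| < R  (from q(1) = ‖w‖² < 1)
  have h1 : Complex.normSq ((V:ℂ) + (starRingEnd ℂ) βc) < R2 := by
    have := key 1
    rw [one_smul] at this
    have hzv : z + v = w := by rw [hv]; abel
    rw [hzv] at this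
    have h2 : Complex.normSq ((V:ℂ)*1 + (starRingEnd ℂ) βc) = V*‖w‖^2 - V*‖z‖^2 + Complex.normSq βc := by
      linarith
    rw [mul_one] at h2
    rw [h2, hR2]
    nlinarith [mul_pos hVpos (by nlinarith [norm_nonneg w] : (0:ℝ) < 1 - ‖w‖^2)]
  -- abs of scaled quantities
  have abslt : ∀ x : ℂ, Complex.normSq x < R2 → Complex.abs (x / (R:ℂ)) < 1 := by
    intro x hx
    rw [map_div₀, Complex.abs_ofReal, abs_of_pos hRpos, div_lt_one hRpos, Complex.abs_apply]
    calc Real.sqrt (Complex.normSq x) < Real.sqrt R2 := Real.sqrt_lt_sqrt (Complex.normSq_nonneg _) hx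
      _ = R := rfl
  set α : ℂ := (starRingEnd ℂ) βc / (R:ℂ) with hα
  set B : ℂ := ((V:ℂ) + (starRingEnd ℂ) βc) / (R:ℂ) with hB
  have hαlt : Complex.abs α < 1 := abslt _ h0
  have hBlt : Complex.abs B < 1 := abslt _ h1
  have hRα : (R:ℂ) * α = (starRingEnd ℂ) βc := by
    rw [hα, mul_div_cancel₀]
    exact_mod_cast hRpos.ne'
  have hRB : (R:ℂ) * B = (V:ℂ) + (starRingEnd ℂ) βc := by
    rw [hB, mul_div_cancel₀]
    exact_mod_cast hRpos.ne'
  set ζ₀ : ℂ := (B - α) / (1 - (starRingEnd ℂ) α * B) with hζ₀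
  have hζ₀lt : Complex.abs ζ₀ < 1 := hζ₀ ▸ mobius_lt_one hαlt hBlt
  set T : ℂ → ℂ := fun lam => (lam + α) / (1 + (starRingEnd ℂ) α * lam) with hT
  have hTden : ∀ lam : ℂ, Complex.abs lam < 1 → 1 + (starRingEnd ℂ) α * lam ≠ 0 := by
    intro lam hlam
    have hneg : Complex.abs (-α) < 1 := by rwa [map_neg_eq_map]
    have := one_sub_ne hneg hlam
    simpa using this
  have hTlt : ∀ lam : ℂ, Complex.abs lam < 1 → Complex.abs (T lam) < 1 := by
    intro lam hlam
    have hneg : Complex.abs (-α) < 1 := by rwa [map_neg_eq_map]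
    have := mobius_lt_one hneg hlam
    simpa [hT, sub_neg_eq_add] using this
  have hT0 : T 0 = α := by
    rw [hT]; simp
  have hTζ₀ : T ζ₀ = B := mobius_param hαlt hBlt hζ₀
  set m : ℂ → ℂ := fun lam => ((R:ℂ) * T lam - (starRingEnd ℂ) βc) / (V:ℂ) with hm
  have hVne : (V:ℂ) ≠ 0 := by exact_mod_cast hVpos.ne'
  have hm0 : m 0 = 0 := by
    rw [hm]; simp only [hT0, hRα]; simp
  have hmζ₀ : m ζ₀ = 1 := by
    rw [hm]; simp only [hTζ₀, hRB]
    rw [add_sub_cancel_right, div_self hVne]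
  set f : ℂ → E2 := fun lam => z + m lam • v with hf
  have hf0 : f 0 = z := by rw [hf]; simp [hm0]
  have hfζ₀ : f ζ₀ = w := by
    rw [hf]; simp only [hmζ₀, one_smul]; rw [hv]; abel
  have hdf : DifferentiableOn ℂ f uDisc := by
    rw [hf, hm, hT]
    have hTdiff : DifferentiableOn ℂ (fun lam => (lam + α) / (1 + (starRingEnd ℂ) α * lam)) uDisc :=
      DifferentiableOn.div ((differentiableOn_id).add (differentiableOn_const _))
        ((differentiableOn_const 1).add ((differentiableOn_const _).mul differentiableOn_id))
        (fun lam hlam => hTden lam (mem_uDisc.1 hlam))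
    have h7 : DifferentiableOn ℂ
        (fun lam => ((R:ℂ) * ((lam + α) / (1 + (starRingEnd ℂ) α * lam)) - (starRingEnd ℂ) βc) / (V:ℂ)) uDisc :=
      ((hTdiff.const_mul ((R:ℂ))).sub (differentiableOn_const _)).div_const ((V:ℂ))
    exact (differentiableOn_const z).add (h7.smul_const v)
  have hmf : MapsTo f uDisc B2 := by
    intro lam hlam
    have hTl := hTlt lam (mem_uDisc.1 hlam)
    have hVm : (V:ℂ) * m lam + (starRingEnd ℂ) βc = (R:ℂ) * T lam := by
      rw [hm]
      field_simp
      ring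
    have hns : Complex.normSq ((V:ℂ) * m lam + (starRingEnd ℂ) βc) < R2 := by
      rw [hVm, Complex.normSq_mul, Complex.normSq_ofReal, ← hRsq]
      have h3 : Complex.normSq (T lam) < 1 := by
        rw [← Complex.sq_abs]
        nlinarith [Complex.abs.nonneg (T lam)]
      nlinarith [sq_nonneg R]
    have hq := key (m lam)
    have h4 : V * ‖z + m lam • v‖^2 < V := by
      rw [hq, hR2] at *
      nlinarith
    have h5 : ‖z + m lam • v‖^2 < 1 := by
      nlinarith
    have h6 : ‖f lam‖ < 1 := by
      rw [hf]
      nlinarith [norm_nonneg (z + m lam • v)]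
    exact mem_ball_zero_iff.2 h6
  exact ⟨pDist 0 ζ₀, f, ζ₀, hdf, hmf, hf0, mem_uDisc.2 hζ₀lt, hfζ₀, rfl⟩

lemma sInf_lemSet_ge {z w : E2} (hz : z ∈ B2) (hw : w ∈ B2) :
    pDist (z 0) (w 0) ≤ sInf (lemSet B2 z w) :=
  le_csInf (lemSet_nonempty hz hw) (lemSet_lower hz hw)

def φ0 : ℂ → E2 := fun ζ => ζ • (EuclideanSpace.single (0 : Fin 2) (1:ℂ))

lemma φ0_apply (ζ : ℂ) : φ0 ζ 0 = ζ := by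
  simp [φ0, PiLp.smul_apply, EuclideanSpace.single_apply]

lemma φ0_norm (ζ : ℂ) : ‖φ0 ζ‖ = Complex.abs ζ := by
  rw [φ0, norm_smul, EuclideanSpace.norm_single]
  simp

lemma φ0_maps : MapsTo φ0 uDisc B2 := fun ζ hζ =>
  mem_ball_zero_iff.2 (by rw [φ0_norm]; exact mem_uDisc.1 hζ)

lemma φ0_diff : DifferentiableOn ℂ φ0 uDisc :=
  (differentiable_id.smul_const _).differentiableOn

lemma chain_lower {ζ η : ℂ} (hζ : ζ ∈ uDisc) (hη : η ∈ uDisc) :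
    ∀ s ∈ {s | ∃ (m : ℕ) (p : ℕ → E2), p 0 = φ0 ζ ∧ p m = φ0 η ∧ (∀ i, i ≤ m → p i ∈ B2) ∧
      s = ∑ i ∈ Finset.range m, sInf (lemSet B2 (p i) (p (i + 1)))}, pDist ζ η ≤ s := by
  rintro s ⟨m, p, hp0, hpm, hpD, rfl⟩
  have key : ∀ n, n ≤ m → pDist ((p 0) 0) ((p n) 0)
      ≤ ∑ i ∈ Finset.range n, sInf (lemSet B2 (p i) (p (i + 1))) := by
    intro n
    induction n with
    | zero => intro _; rw [pDist_self]; simp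
    | succ n ih =>
      intro hn
      have hn' : n ≤ m := by omega
      have h1 := ih hn'
      have hq0 : Complex.abs ((p 0) 0) < 1 := coord_lt_one (hpD 0 (by omega))
      have hqn : Complex.abs ((p n) 0) < 1 := coord_lt_one (hpD n hn')
      have hqn1 : Complex.abs ((p (n+1)) 0) < 1 := coord_lt_one (hpD (n+1) hn)
      have htri := pDist_triangle hq0 hqn hqn1
      have h2 : pDist ((p n) 0) ((p (n+1)) 0) ≤ sInf (lemSet B2 (p n) (p (n+1))) :=
        sInf_lemSet_ge (hpD n hn') (hpD (n+1) hn)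
      rw [Finset.sum_range_succ]
      linarith
  have := key m le_rfl
  rwa [hp0, hpm, φ0_apply, φ0_apply] at this

lemma pDist_in_lemSet {ζ η : ℂ} (hζ : ζ ∈ uDisc) (hη : η ∈ uDisc) :
    pDist ζ η ∈ lemSet B2 (φ0 ζ) (φ0 η) := by
  have hζ1 := mem_uDisc.1 hζ
  have hη1 := mem_uDisc.1 hη
  set ζ' : ℂ := (η - ζ) / (1 - (starRingEnd ℂ) ζ * η) with hζ'
  have hζ'lt : Complex.abs ζ' < 1 := hζ' ▸ mobius_lt_one hζ1 hη1
  set T : ℂ → ℂ := fun lam => (lam + ζ) / (1 + (starRingEnd ℂ) ζ * lam) with hT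
  have hTden : ∀ lam : ℂ, Complex.abs lam < 1 → 1 + (starRingEnd ℂ) ζ * lam ≠ 0 := by
    intro lam hlam
    have hneg : Complex.abs (-ζ) < 1 := by rwa [map_neg_eq_map]
    have := one_sub_ne hneg hlam
    simpa using this
  have hTlt : ∀ lam : ℂ, Complex.abs lam < 1 → Complex.abs (T lam) < 1 := by
    intro lam hlam
    have hneg : Complex.abs (-ζ) < 1 := by rwa [map_neg_eq_map]
    have := mobius_lt_one hneg hlam
    simpa [hT, sub_neg_eq_add] using this
  have hT0 : T 0 = ζ := by rw [hT]; simp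
  have hTζ' : T ζ' = η := mobius_param hζ1 hη1 hζ'
  refine ⟨fun lam => φ0 (T lam), ζ', ?_, ?_, ?_, mem_uDisc.2 hζ'lt, ?_, ?_⟩
  · have hTdiff : DifferentiableOn ℂ T uDisc := by
      rw [hT]
      exact DifferentiableOn.div ((differentiableOn_id).add (differentiableOn_const _))
        ((differentiableOn_const 1).add ((differentiableOn_const _).mul differentiableOn_id))
        (fun lam hlam => hTden lam (mem_uDisc.1 hlam))
    exact DifferentiableOn.comp (g := φ0) (f := T) φ0_diff hTdiff
      (fun x hx => mem_uDisc.2 (hTlt x (mem_uDisc.1 hx)))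
  · exact fun lam hlam => φ0_maps (mem_uDisc.2 (hTlt lam (mem_uDisc.1 hlam)))
  · show φ0 (T 0) = φ0 ζ
    rw [hT0]
  · show φ0 (T ζ') = φ0 η
    rw [hTζ']
  · rw [pDist_zero_left, pDist_eq_symm_abs, hζ']

lemma kDist_geodesic {ζ η : ℂ} (hζ : ζ ∈ uDisc) (hη : η ∈ uDisc) :
    kDist B2 (φ0 ζ) (φ0 η) = pDist ζ η := by
  set p : ℕ → E2 := fun i => if i = 0 then φ0 ζ else φ0 η with hp
  have hmem : sInf (lemSet B2 (φ0 ζ) (φ0 η)) ∈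
      {s | ∃ (m : ℕ) (q : ℕ → E2), q 0 = φ0 ζ ∧ q m = φ0 η ∧ (∀ i, i ≤ m → q i ∈ B2) ∧
        s = ∑ i ∈ Finset.range m, sInf (lemSet B2 (q i) (q (i + 1)))} := by
    refine ⟨1, p, by simp [hp], by simp [hp], ?_, ?_⟩
    · intro i _
      rw [hp]
      by_cases h : i = 0 <;> simp [h, φ0_maps hζ, φ0_maps hη]
    · rw [Finset.sum_range_one]
      simp [hp]
  apply le_antisymm
  · calc kDist B2 (φ0 ζ) (φ0 η) ≤ sInf (lemSet B2 (φ0 ζ) (φ0 η)) :=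
        csInf_le (kDist_bddBelow B2 _ _) hmem
      _ ≤ pDist ζ η := csInf_le ⟨0, lemSet_nonneg⟩ (pDist_in_lemSet hζ hη)
  · exact le_csInf ⟨_, hmem⟩ (chain_lower hζ hη)


def ρ0 : E2 → E2 := fun z => φ0 (z 0)
def ρt0 : E2 → ℂ := fun z => z 0

lemma device : IsLempertDevice B2 φ0 ρ0 ρt0 := by
  refine ⟨⟨φ0_diff, φ0_maps, fun ζ hζ η hη => kDist_geodesic hζ hη⟩, ⟨?_, ?_, ?_, ?_, ?_⟩, ?_⟩
  · -- differentiability of ρ0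
    have : ρ0 = ⇑(((ContinuousLinearMap.id ℂ ℂ).smulRight
        (EuclideanSpace.single (0 : Fin 2) (1:ℂ))).comp (EuclideanSpace.proj (0 : Fin 2))) := rfl
    rw [this]
    exact (ContinuousLinearMap.differentiable _).differentiableOn
  · intro z hz
    exact ⟨z 0, mem_uDisc.2 (coord_lt_one hz), rfl⟩
  · intro z _
    show φ0 ((φ0 (z 0)) 0) = φ0 (z 0)
    rw [φ0_apply]
  · intro ζ _
    show φ0 ((φ0 ζ) 0) = φ0 ζ
    rw [φ0_apply]
  · intro ζ hζ
    refine ⟨(EuclideanSpace.proj (0 : Fin 2)).toLinearMap, ζ, ?_, ?_⟩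
    · intro h
      have h2 := LinearMap.congr_fun h (EuclideanSpace.single (0 : Fin 2) (1:ℂ))
      have h3 : (EuclideanSpace.proj (0 : Fin 2)) (EuclideanSpace.single (0 : Fin 2) (1:ℂ))
          = (1:ℂ) := by
        show (EuclideanSpace.single (0 : Fin 2) (1:ℂ)) 0 = 1
        simp [EuclideanSpace.single_apply]
      simp only [ContinuousLinearMap.coe_coe, LinearMap.zero_apply] at h2
      rw [h3] at h2
      exact one_ne_zero h2
    · ext w
      simp only [mem_setOf_eq, ContinuousLinearMap.coe_coe]
      have hproj : (EuclideanSpace.proj (0 : Fin 2)) w = w 0 := rfl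
      constructor
      · rintro ⟨hw, heq⟩
        refine ⟨hw, ?_⟩
        have h4 := congrArg (fun v : E2 => v 0) heq
        rw [hproj]
        simpa [ρ0, φ0_apply] using h4
      · rintro ⟨hw, heq⟩
        rw [hproj] at heq
        exact ⟨hw, by rw [ρ0, heq]⟩
  · intro z hz
    exact ⟨mem_uDisc.2 (coord_lt_one hz), rfl⟩



lemma blochRadiusD_mono {U V : Set ℂ} (h : U ⊆ V) : blochRadiusD U ≤ blochRadiusD V := by
  refine iSup₂_le fun r hP => ?_
  obtain ⟨z, hz, hsub⟩ := hP
  exact le_iSup₂_of_le r ⟨z, hz, hsub.trans h⟩ le_rfl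

lemma blochRadiusD_horoD_top : blochRadiusD (horoD 2) = ⊤ := by
  apply ENNReal.eq_top_of_forall_nnreal_le
  intro r
  obtain ⟨z, hz, hsub⟩ := hball_in_horoD r r.coe_nonneg
  exact le_iSup₂_of_le r ⟨z, hz, hsub⟩ le_rfl


/-- `X = E(e₁,2) \ E(e₁,1)` is not 1-Bloch in `𝔹²`: its orthogonal
projection onto the geodesic `ζ ↦ (ζ,0)` is the horodisc `E_𝔻(1,2)`, which is not
a Bloch subdomain of the disc. -/
theorem stmt16 :
    (fun z : EuclideanSpace ℂ (Fin 2) => z 0) '' (horoB 2 \ horoB 1) = horoD 2 ∧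
    blochRadiusD (horoD 2) = ⊤ ∧
    ¬ OneBloch (Metric.ball (0 : EuclideanSpace ℂ (Fin 2)) 1) (horoB 2 \ horoB 1) := by
  have himg := horo_image_eq
  refine ⟨himg, blochRadiusD_horoD_top, ?_⟩
  rintro ⟨C, hC0, h⟩
  obtain ⟨U, hUo, hUc, hUs, hUi, hUr⟩ := h φ0 ρ0 ρt0 device
  have hsub : horoD 2 ⊆ U := by
    rw [← himg]
    exact hUi
  have htop : (⊤ : ℝ≥0∞) ≤ blochRadiusD U :=
    blochRadiusD_horoD_top ▸ blochRadiusD_mono hsub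
  exact not_top_lt (lt_of_le_of_lt htop hUr)
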